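/- Let b11, b12, b21, b22 ∈ (0,1). For p, q ∈ [0,1] define d1(p) = p(1−b11) + (1−p)b12 and d2(q) = q(1−b22) + (1−q)b21, and define p* = 1 if b11+b12−1 > 0 and p* = 0 otherwise, q* = 1 if b21+b22−1 < 0 and q* = 0 otherwise. Then for all p, q ∈ [0,1], d2(q)/(d1(p)+d2(q)) ≤ d2(q*)/(d1(p*)+d2(q*)); that is, the policy (p*,q*) maximizes the asymptotic proportion d2/(d1+d2) of type-1 users over all stationary policies. -/

import Mathlib

/-!
`d2 / (d1 + d2)` increases with `d2` and decreases with `d1`. Each `dᵢ` is an affine function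
of its policy variable, so over `[0, 1]` the value `d1` is smallest and `d2` largest at an
endpoint, and `p*`, `q*` pick exactly those endpoints.
-/

theorem div_add_le_div_add {A A' B B' : ℝ} (hA' : 0 < A') (hB : 0 ≤ B) (hA : A' ≤ A)
    (hB' : B ≤ B') : B / (A + B) ≤ B' / (A' + B') := by
  rw [div_le_div_iff₀ (by linarith) (by linarith)]
  nlinarith [mul_le_mul hB' hA hA'.le (hB.trans hB')]

theorem min_le_affine {x y p : ℝ} (hp : p ∈ Set.Icc (0:ℝ) 1) :
    min x y ≤ p * x + (1 - p) * y :=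
  Convex.min_le_combo x y hp.1 (sub_nonneg.2 hp.2) (add_sub_cancel p 1)

theorem affine_le_max {x y p : ℝ} (hp : p ∈ Set.Icc (0:ℝ) 1) :
    p * x + (1 - p) * y ≤ max x y :=
  Convex.combo_le_max x y hp.1 (sub_nonneg.2 hp.2) (add_sub_cancel p 1)

/-- The policy `(p*, q*)` maximizes the asymptotic proportion `d2/(d1+d2)` of
type-1 users over all stationary policies `(p,q) ∈ [0,1]²`. -/
theorem stmt4 (b11 b12 b21 b22 : ℝ)
    (hb11 : b11 ∈ Set.Ioo (0:ℝ) 1) (hb12 : b12 ∈ Set.Ioo (0:ℝ) 1)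
    (hb21 : b21 ∈ Set.Ioo (0:ℝ) 1) (hb22 : b22 ∈ Set.Ioo (0:ℝ) 1)
    (d1 d2 : ℝ → ℝ)
    (hd1 : ∀ p, d1 p = p * (1 - b11) + (1 - p) * b12)
    (hd2 : ∀ q, d2 q = q * (1 - b22) + (1 - q) * b21)
    (pstar qstar : ℝ)
    (hp : pstar = if b11 + b12 - 1 > 0 then 1 else 0)
    (hq : qstar = if b21 + b22 - 1 < 0 then 1 else 0) :
    ∀ p ∈ Set.Icc (0:ℝ) 1, ∀ q ∈ Set.Icc (0:ℝ) 1,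
      d2 q / (d1 p + d2 q) ≤ d2 qstar / (d1 pstar + d2 qstar) := by
  intro p hp01 q hq01
  have hd1_star : d1 pstar = min (1 - b11) b12 := by
    rw [hd1, hp]
    split_ifs with h
    · rw [min_eq_left (by linarith)]; ring
    · rw [min_eq_right (by linarith)]; ring
  have hd2_star : d2 qstar = max (1 - b22) b21 := by
    rw [hd2, hq]
    split_ifs with h
    · rw [max_eq_left (by linarith)]; ring
    · rw [max_eq_right (by linarith)]; ring
  have hd1_pos : 0 < d1 pstar := hd1_star ▸ lt_min (by linarith [hb11.2]) hb12.1
  have hd2_nonneg : 0 ≤ d2 q :=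
    (le_min (by linarith [hb22.2]) hb21.1.le).trans (hd2 q ▸ min_le_affine hq01)
  have hd1_le : d1 pstar ≤ d1 p := hd1_star ▸ hd1 p ▸ min_le_affine hp01
  have hd2_le : d2 q ≤ d2 qstar := hd2_star ▸ hd2 q ▸ affine_le_max hq01
  exact div_add_le_div_add hd1_pos hd2_nonneg hd1_le hd2_le
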